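/- With definitions as above, the generalized Apostol-Bernoulli polynomials can be recovered from the generalized Apostol-Bernoulli poly-Daehee polynomials: 𝔅_{n,a}^{[m-1]}(η;λ) = Σ_{j=0}^n C(n,j) · 𝔟_j^{(k)}(-γ) · 𝔅𝔇_{n-j,a}^{[k,m-1]}(γ,η;λ), where 𝔟_n^{(k)}(γ) are the poly-Bernoulli polynomials of the second kind defined by (1+x)^γ · Li_k(1-e^{-x})/log(1+x) = Σ_n 𝔟_n^{(k)}(γ) x^n/n!. -/

import Mathlib

open PowerSeries Finset

noncomputable section

variable (F : Type*) [Field F] [CharZero F]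

/-- Exponential generating function `Σ c n * x^n / n!`. -/
def egf (c : ℕ → F) : PowerSeries F := PowerSeries.mk fun n => c n / n.factorial

/-- `log(1+x)` as a formal power series. -/
def logOnePlus : PowerSeries F := PowerSeries.mk fun n => if n = 0 then 0 else (-1) ^ (n + 1) / n

/-- `e^{-x}` as a formal power series. -/
def expNeg : PowerSeries F := PowerSeries.mk fun n => (-1) ^ n / n.factorial

/-- `Li_k(1 - e^{-x})`: since `(1-e^{-x})^m` has order `≥ m`, the `n`-th coefficient of the
composition is the finite sum `Σ_{m=1}^{n} m^{-k} * coeff n ((1-e^{-x})^m)`. -/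
def liComp (k : ℤ) : PowerSeries F :=
  PowerSeries.mk fun n => ∑ m ∈ Finset.range (n + 1),
    (if m = 0 then 0 else ((m : F) ^ k)⁻¹) * PowerSeries.coeff n ((1 - expNeg F) ^ m)

/-- `(1+x)^γ = Σ_j (γ)_j x^j/j!` with `(γ)_j = γ(γ-1)⋯(γ-j+1)` the falling factorial. -/
def onePlusPow (γ : F) : PowerSeries F := egf F fun j => ∏ i ∈ Finset.range j, (γ - i)

/-- Truncated exponential `Σ_{l<m} x^l/l!`. -/
def truncExp (m : ℕ) : PowerSeries F :=
  PowerSeries.mk fun l => if l < m then ((l.factorial : F))⁻¹ else 0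

/-- `λ e^x - Σ_{l<m} x^l/l!`, the denominator in the generalized Apostol-Bernoulli
generating function. -/
def bden (lam : F) (m : ℕ) : PowerSeries F := PowerSeries.C lam * PowerSeries.exp F - truncExp F m

/-!
Since `(1+x)^γ (1+x)^{-γ} = 1` (Chu–Vandermonde for falling factorials), multiplying the
generating function of `𝔟^{(k)}(-γ)` by that of `𝔅𝔇` cancels `(1+x)^γ`, `log(1+x)` and
`Li_k(1-e^{-x})`, leaving that of `𝔅`. The cancellation is carried out after multiplying by
`Li_k(1-e^{-x}) (λe^x - Σ_{l<m} x^l/l!)^a`, which is nonzero, in the domain `F⟦X⟧`; the binomial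
convolution is the coefficient formula for a product of exponential generating functions.
-/

lemma descPochhammer_smeval_eq_prod_range {R : Type*} [CommRing R] (n : ℕ) (r : R) :
    (descPochhammer ℤ n).smeval r = ∏ j ∈ Finset.range n, (r - j) := by
  rw [← Polynomial.aeval_eq_smeval, Polynomial.aeval_def, Polynomial.eval₂_eq_eval_map,
    descPochhammer_map, descPochhammer_eval_eq_prod_range]

lemma egf_mul (c d : ℕ → F) :
    egf F c * egf F d =
      egf F fun n => ∑ j ∈ Finset.range (n + 1), (n.choose j : F) * c j * d (n - j) := by
  ext n
  simp only [egf, coeff_mk, coeff_mul, Finset.Nat.sum_antidiagonal_eq_sum_range_succ_mk,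
    Finset.sum_div]
  refine Finset.sum_congr rfl fun j hj => ?_
  have hjn : j ≤ n := Nat.lt_succ_iff.mp (Finset.mem_range.mp hj)
  rw [Nat.cast_choose F hjn]
  have := Nat.factorial_ne_zero j
  have := Nat.factorial_ne_zero (n - j)
  have := Nat.factorial_ne_zero n
  field_simp

lemma egf_injective : Function.Injective (egf F) := by
  intro c d h
  funext n
  have hn := congrArg (PowerSeries.coeff n) h
  simp only [egf, coeff_mk] at hn
  exact (div_left_inj' (Nat.cast_ne_zero.mpr n.factorial_ne_zero)).mp hn

lemma onePlusPow_add (γ δ : F) :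
    onePlusPow F (γ + δ) = onePlusPow F γ * onePlusPow F δ := by
  rw [onePlusPow, onePlusPow, onePlusPow, egf_mul]
  congr 1
  funext n
  simp only [← descPochhammer_smeval_eq_prod_range,
    Ring.descPochhammer_smeval_add n (Commute.all γ δ),
    Finset.Nat.sum_antidiagonal_eq_sum_range_succ_mk, mul_assoc]

lemma onePlusPow_zero : onePlusPow F 0 = 1 := by
  ext n
  rcases n with _ | n
  · simp [onePlusPow, egf]
  · simp [onePlusPow, egf, Finset.prod_range_succ', PowerSeries.coeff_one]

lemma onePlusPow_mul_onePlusPow_neg (γ : F) : onePlusPow F γ * onePlusPow F (-γ) = 1 := by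
  rw [← onePlusPow_add, add_neg_cancel, onePlusPow_zero]

omit [CharZero F] in
lemma coeff_one_liComp (k : ℤ) : PowerSeries.coeff 1 (liComp F k) = 1 := by
  simp [liComp, expNeg, Finset.sum_range_succ, PowerSeries.coeff_one]

lemma liComp_ne_zero (k : ℤ) : liComp F k ≠ 0 := fun h => by
  simpa [h] using coeff_one_liComp F k

lemma X_pow_mul_rescale_exp_ne_zero (n : ℕ) (η : F) :
    PowerSeries.X ^ n * PowerSeries.rescale η (PowerSeries.exp F) ≠ 0 := by
  refine mul_ne_zero (pow_ne_zero _ PowerSeries.X_ne_zero) fun h => ?_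
  simpa using congrArg (PowerSeries.coeff 0) h

theorem apostolBernoulli_from_gabpdp (k : ℤ) (m a : ℕ)
    (γ η lam : F) (B b BD : ℕ → F)
    (hb : logOnePlus F * egf F b = onePlusPow F (-γ) * liComp F k)
    (hB : bden F lam m ^ a * egf F B =
      PowerSeries.X ^ (m * a) * PowerSeries.rescale η (PowerSeries.exp F))
    (hBD : liComp F k * bden F lam m ^ a * egf F BD =
      onePlusPow F γ * logOnePlus F * PowerSeries.X ^ (m * a) *
        PowerSeries.rescale η (PowerSeries.exp F)) :
    ∀ n : ℕ, B n = ∑ j ∈ Finset.range (n + 1), (n.choose j : F) * b j * BD (n - j) := by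
  have hden : bden F lam m ^ a ≠ 0 :=
    left_ne_zero_of_mul (hB ▸ X_pow_mul_rescale_exp_ne_zero F (m * a) η)
  set R := PowerSeries.X ^ (m * a) * PowerSeries.rescale η (PowerSeries.exp F)
  have hprod : liComp F k * bden F lam m ^ a * (egf F b * egf F BD) =
      liComp F k * bden F lam m ^ a * egf F B :=
    calc liComp F k * bden F lam m ^ a * (egf F b * egf F BD)
        = onePlusPow F γ * (logOnePlus F * egf F b) * R := by
          rw [mul_comm (egf F b), ← mul_assoc, hBD]; ring
      _ = onePlusPow F γ * onePlusPow F (-γ) * (liComp F k * R) := by rw [hb]; ring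
      _ = liComp F k * bden F lam m ^ a * egf F B := by
          rw [onePlusPow_mul_onePlusPow_neg, one_mul, mul_assoc, hB]
  have hB_eq := mul_left_cancel₀ (mul_ne_zero (liComp_ne_zero F k) hden) hprod
  rw [egf_mul] at hB_eq
  exact fun n => congrFun (egf_injective F hB_eq) n |>.symm
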